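/- arXiv:2512.06672 — 3 statements merged into one kernel-verified Lean document; each statement's English description precedes it below -/
import Mathlib

section
/- Let n ≥ 2 and ζ = exp(2πi/n). Then the sum over k = 1 to n-1 of 1/(1 - ζ^k)^4 equals (n-1)(n³ + n² - 109n + 251)/720. -/
/-!
Put `Q = ∏_{k=1}^{n-1} (X - ζ^k) = 1 + X + ⋯ + X^{n-1}`. Near any point off the roots,
`Q' = (∑_k 1/(X - ζ^k)) · Q`; differentiating this `m` times by Leibniz's rule and evaluating at
`1` expresses `Q^{(m+1)}(1) = (m+1)! C(n, m+2)` through the power sums `S_j = ∑_k (1 - ζ^k)^{-j}`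
and the lower derivatives `Q^{(i)}(1) = i! C(n, i+1)`. For `m = 0, 1, 2, 3` these identities form
a triangular linear system (the coefficient of the new `S_{m+1}` is `± m! n`), which gives
`S₁, S₂, S₃` and finally `S₄`.
-/

open Finset Polynomial
open scoped Nat

theorem Nat.sum_range_choose_eq_choose_succ (n m : ℕ) :
    ∑ j ∈ range n, j.choose m = n.choose (m + 1) := by
  induction n with
  | zero => simp
  | succ n ih => rw [sum_range_succ, ih, Nat.choose_succ_succ', add_comm]

theorem eval_one_iterate_derivative_geom_sum {R : Type*} [CommSemiring R] (n m : ℕ) :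
    eval 1 (derivative^[m] (∑ j ∈ range n, (X : R[X]) ^ j)) = m ! * n.choose (m + 1) := by
  simp [iterate_derivative_sum, iterate_derivative_X_pow_eq_natCast_mul, eval_finsetSum,
    Nat.descFactorial_eq_factorial_mul_choose, ← mul_sum, ← Nat.sum_range_choose_eq_choose_succ]

theorem IsPrimitiveRoot.prod_X_sub_C_pow_eq_geom_sum {R : Type*} [CommRing R] [IsDomain R]
    {μ : R} {n : ℕ} (hμ : IsPrimitiveRoot μ n) (hn : 0 < n) :
    ∏ k ∈ Icc 1 (n - 1), (X - C (μ ^ k)) = ∑ j ∈ range n, (X : R[X]) ^ j := by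
  have h := X_pow_sub_C_eq_prod hμ hn (one_pow n)
  rw [range_eq_Ico, prod_eq_prod_Ico_succ_bot hn, pow_zero, mul_one, C_1, ← mul_geom_sum,
    ← Finset.Icc_sub_one_right_eq_Ico_of_not_isMin (by simpa using hn.ne')] at h
  simpa using (mul_left_cancel₀ (X_sub_C_ne_zero 1) h).symm

theorem eval_derivative_prod_X_sub_C {K ι : Type*} [Field K] (s : Finset ι) (a : ι → K) {z : K}
    (hz : ∀ k ∈ s, z ≠ a k) :
    eval z (derivative (∏ k ∈ s, (X - C (a k)))) =
      (∑ k ∈ s, (z - a k)⁻¹) * eval z (∏ k ∈ s, (X - C (a k))) := by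
  classical
  simp only [derivative_prod_finset, eval_finsetSum, sum_mul, eval_prod, derivative_X_sub_C,
    mul_one, eval_sub, eval_X, eval_C]
  refine sum_congr rfl fun k hk => ?_
  rw [← mul_prod_erase s _ hk, inv_mul_cancel_left₀ (sub_ne_zero.mpr (hz k hk))]

section Analytic

variable {𝕜 : Type*} [NontriviallyNormedField 𝕜]

theorem Polynomial.iterate_deriv_eval (p : 𝕜[X]) (m : ℕ) :
    deriv^[m] (fun w => p.eval w) = fun w => (derivative^[m] p).eval w := by
  induction m generalizing p with
  | zero => rfl
  | succ m ih =>
    rw [Function.iterate_succ_apply, Function.iterate_succ_apply, ← ih]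
    congr 1
    funext w
    exact Polynomial.deriv p

theorem iteratedDeriv_inv_sub {b z : 𝕜} (m : ℕ) :
    iteratedDeriv m (fun w => (w - b)⁻¹) z = (-1) ^ m * m ! * ((z - b) ^ (m + 1))⁻¹ := by
  rw [iteratedDeriv_eq_iterate]
  simpa [← zpow_natCast, ← zpow_neg, sub_eq_add_neg] using
    congrFun (iter_deriv_inv_linear_sub m 1 b) z

open Filter Topology in
theorem eval_iterate_derivative_succ_prod_X_sub_C {ι : Type*} (s : Finset ι) (a : ι → 𝕜)
    {z : 𝕜} (hz : ∀ k ∈ s, z ≠ a k) (m : ℕ) :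
    eval z (derivative^[m + 1] (∏ k ∈ s, (X - C (a k)))) =
      ∑ i ∈ range (m + 1), m.choose i * ((-1) ^ i * i ! * ∑ k ∈ s, ((z - a k) ^ (i + 1))⁻¹) *
        eval z (derivative^[m - i] (∏ k ∈ s, (X - C (a k)))) := by
  set Q := ∏ k ∈ s, (X - C (a k))
  set L : 𝕜 → 𝕜 := fun w => ∑ k ∈ s, (w - a k)⁻¹
  have hinv : ∀ k ∈ s, ∀ i : ℕ, ContDiffAt 𝕜 i (fun w => (w - a k)⁻¹) z := fun k hk _ =>
    (contDiffAt_id.sub contDiffAt_const).inv (sub_ne_zero.2 (hz k hk))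
  have hL : ContDiffAt 𝕜 m L z := ContDiffAt.sum fun k hk => hinv k hk m
  have hQ : ContDiffAt 𝕜 m (fun w => eval w Q) z := (Q.contDiff_aeval m).contDiffAt
  have hlog : (fun w => eval w (derivative Q)) =ᶠ[𝓝 z] L * fun w => eval w Q := by
    filter_upwards [(eventually_all_finset s).2 fun k hk => eventually_ne_nhds (hz k hk)]
      with w hw using eval_derivative_prod_X_sub_C s a hw
  calc eval z (derivative^[m + 1] Q)
      = iteratedDeriv m (fun w => eval w (derivative Q)) z := by
        rw [iteratedDeriv_eq_iterate, iterate_deriv_eval, Function.iterate_succ_apply]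
    _ = iteratedDeriv m (L * fun w => eval w Q) z := hlog.iteratedDeriv_eq m
    _ = ∑ i ∈ range (m + 1),
          m.choose i * iteratedDeriv i L z * iteratedDeriv (m - i) (fun w => eval w Q) z := by
        simpa [iteratedDerivWithin_univ] using iteratedDerivWithin_mul (Set.mem_univ z)
          uniqueDiffOn_univ hL.contDiffWithinAt hQ.contDiffWithinAt
    _ = _ := by
        refine sum_congr rfl fun i _ => ?_
        rw [iteratedDeriv_fun_sum fun k hk => hinv k hk i, iteratedDeriv_eq_iterate,
          iterate_deriv_eval]
        simp only [iteratedDeriv_inv_sub, mul_sum]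

theorem IsPrimitiveRoot.newton_identity_inv_one_sub_pow {ζ : 𝕜} {n : ℕ}
    (hζ : IsPrimitiveRoot ζ n) (hn : 0 < n) (m : ℕ) :
    (m + 1)! * (n.choose (m + 2) : 𝕜) =
      ∑ i ∈ range (m + 1), m.choose i *
        ((-1) ^ i * i ! * ∑ k ∈ Icc 1 (n - 1), ((1 - ζ ^ k) ^ (i + 1))⁻¹) *
          ((m - i)! * n.choose (m - i + 1)) := by
  have h1 : ∀ k ∈ Icc 1 (n - 1), (1 : 𝕜) ≠ ζ ^ k := fun k hk => by
    rw [mem_Icc] at hk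
    exact (hζ.pow_ne_one_of_pos_of_lt (by omega) (by omega)).symm
  simpa only [hζ.prod_X_sub_C_pow_eq_geom_sum hn, eval_one_iterate_derivative_geom_sum] using
    eval_iterate_derivative_succ_prod_X_sub_C _ (ζ ^ ·) h1 m

variable [CharZero 𝕜] {ζ : 𝕜} {n : ℕ}

theorem IsPrimitiveRoot.sum_inv_one_sub_pow (hζ : IsPrimitiveRoot ζ n) (hn : 0 < n) :
    ∑ k ∈ Icc 1 (n - 1), (1 - ζ ^ k)⁻¹ = ((n : 𝕜) - 1) / 2 := by
  have e := hζ.newton_identity_inv_one_sub_pow hn 0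
  norm_num [Nat.cast_choose_eq_descPochhammer_div, descPochhammer_succ_eval] at e
  exact mul_left_cancel₀ (Nat.cast_ne_zero.2 hn.ne') (by linear_combination -e)

theorem IsPrimitiveRoot.sum_inv_one_sub_pow_sq (hζ : IsPrimitiveRoot ζ n) (hn : 0 < n) :
    ∑ k ∈ Icc 1 (n - 1), ((1 - ζ ^ k) ^ 2)⁻¹ = -((n : 𝕜) - 1) * (n - 5) / 12 := by
  have e := hζ.newton_identity_inv_one_sub_pow hn 1
  norm_num [sum_range_succ, Nat.cast_choose_eq_descPochhammer_div, descPochhammer_succ_eval,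
    Nat.factorial, hζ.sum_inv_one_sub_pow hn] at e
  exact mul_left_cancel₀ (Nat.cast_ne_zero.2 hn.ne') (by linear_combination e)

theorem IsPrimitiveRoot.sum_inv_one_sub_pow_cube (hζ : IsPrimitiveRoot ζ n) (hn : 0 < n) :
    ∑ k ∈ Icc 1 (n - 1), ((1 - ζ ^ k) ^ 3)⁻¹ = -((n : 𝕜) - 1) * (n - 3) / 8 := by
  have e := hζ.newton_identity_inv_one_sub_pow hn 2
  norm_num [sum_range_succ, Nat.cast_choose_eq_descPochhammer_div, descPochhammer_succ_eval,
    Nat.factorial, hζ.sum_inv_one_sub_pow hn, hζ.sum_inv_one_sub_pow_sq hn] at e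
  exact mul_left_cancel₀ (Nat.cast_ne_zero.2 hn.ne') (by linear_combination -(1 / 2) * e)

theorem IsPrimitiveRoot.sum_inv_one_sub_pow_four (hζ : IsPrimitiveRoot ζ n) (hn : 0 < n) :
    ∑ k ∈ Icc 1 (n - 1), ((1 - ζ ^ k) ^ 4)⁻¹ =
      ((n : 𝕜) - 1) * ((n : 𝕜) ^ 3 + (n : 𝕜) ^ 2 - 109 * n + 251) / 720 := by
  have e := hζ.newton_identity_inv_one_sub_pow hn 3
  norm_num [sum_range_succ, Nat.cast_choose_eq_descPochhammer_div, descPochhammer_succ_eval,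
    Nat.factorial, hζ.sum_inv_one_sub_pow hn, hζ.sum_inv_one_sub_pow_sq hn,
    hζ.sum_inv_one_sub_pow_cube hn] at e
  exact mul_left_cancel₀ (Nat.cast_ne_zero.2 hn.ne') (by linear_combination (1 / 6) * e)

end Analytic

theorem sum_inv_pow4_one_sub_root_of_unity (n : ℕ) (hn : 2 ≤ n)
    (ζ : ℂ) (hζ : ζ = Complex.exp (2 * Real.pi * Complex.I / n)) :
    ∑ k ∈ Finset.Icc 1 (n - 1), 1 / (1 - ζ ^ k) ^ 4 =
      ((n : ℂ) - 1) * ((n : ℂ) ^ 3 + (n : ℂ) ^ 2 - 109 * n + 251) / 720 := by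
  have hprim : IsPrimitiveRoot ζ n := hζ ▸ Complex.isPrimitiveRoot_exp n (by omega)
  simpa only [one_div] using hprim.sum_inv_one_sub_pow_four (by omega)
end

section
/- Let n ≥ 2 and ζ = exp(2πi/n). Then Σ_{1≤i<j≤n-1} [(1-ζ^i)^{-2}(1-ζ^j)^{-3} + (1-ζ^i)^{-3}(1-ζ^j)^{-2}] = (n-1)(n-2)(n-5)(n-7)/144. -/
/-!
The numbers `y i = (1 - ζ ^ i)⁻¹`, `1 ≤ i ≤ n - 1`, have known elementary symmetric functions:
putting `u = 1 + x`, `v = x` in `u ^ n - v ^ n = ∏ i < n, (u - ζ ^ i * v)` and using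
`∏ (1 - ζ ^ i) = n` gives `n * ∏ (x + y i) = (1 + x) ^ n - x ^ n`, so `e k = C(n, k + 1) / n`.
The sum is the monomial symmetric function `m₃₂ = p₂ p₃ - p₅` of the `y i`, which Newton's
identities turn into `e₁ e₂² - 2 e₁² e₃ - e₂ e₃ + 5 e₁ e₄ - 5 e₅`.
-/

open Finset Polynomial

theorem Finset.sum_Icc_sum_Ioc_add_swap_add_sum_diag {M : Type*} [AddCommMonoid M]
    (f : ℕ → ℕ → M) (a b : ℕ) :
    ∑ i ∈ Icc a b, ∑ j ∈ Ioc i b, (f i j + f j i) + ∑ i ∈ Icc a b, f i i =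
      ∑ i ∈ Icc a b, ∑ j ∈ Icc a b, f i j := by
  have hswap : ∑ i ∈ Icc a b, ∑ j ∈ Ioc i b, f j i = ∑ i ∈ Icc a b, ∑ j ∈ Ico a i, f i j :=
    sum_comm' fun i j => by simp only [mem_Icc, mem_Ioc, mem_Ico]; omega
  have hrow : ∀ i ∈ Icc a b,
      ∑ j ∈ Ioc i b, f i j + ∑ j ∈ Ico a i, f i j + f i i = ∑ j ∈ Icc a b, f i j := by
    intro i hi
    rw [mem_Icc] at hi
    have hsplit : Icc a b = (Ioc i b ∪ Ico a i) ∪ {i} := by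
      ext j; simp only [mem_Icc, mem_union, mem_Ioc, mem_Ico, mem_singleton]; omega
    rw [hsplit, sum_union, sum_union, sum_singleton] <;>
      simp only [disjoint_left, mem_union, mem_Ioc, mem_Ico, mem_singleton] <;> omega
  simp only [sum_add_distrib, hswap, ← sum_congr rfl hrow]

theorem Finset.prod_Icc_one_eq_prod_range {M : Type*} [CommMonoid M] (f : ℕ → M) (m : ℕ) :
    ∏ i ∈ Icc 1 m, f i = ∏ k ∈ range m, f (k + 1) := by
  rw [range_eq_Ico, prod_Ico_add' f 0 m 1, zero_add, Ico_add_one_right_eq_Icc]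

theorem IsPrimitiveRoot.pow_sub_pow_eq_prod_range_sub_mul {R : Type*} [CommRing R] [IsDomain R]
    {ζ : R} {n : ℕ} (hζ : IsPrimitiveRoot ζ n) (hn : 0 < n) (x y : R) :
    x ^ n - y ^ n = ∏ i ∈ range n, (x - ζ ^ i * y) := by
  classical
  rw [hζ.pow_sub_pow_eq_prod_sub_mul x y hn, nthRootsFinset_def, Finset.prod,
    Multiset.toFinset_val, hζ.nthRoots_one_nodup.dedup, hζ.nthRoots_eq (one_pow n),
    Multiset.map_map]
  simp [Finset.prod]

namespace IsPrimitiveRoot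

variable {K : Type*} [Field K] {ζ : K} {n : ℕ}

theorem C_mul_prod_X_add_C_inv_one_sub_pow (hζ : IsPrimitiveRoot ζ n) (hn : 0 < n) :
    C (n : K) * ∏ i ∈ Icc 1 (n - 1), (X + C (1 - ζ ^ i)⁻¹) = (1 + X) ^ n - X ^ n := by
  obtain ⟨m, rfl⟩ : ∃ m, n = m + 1 := ⟨n - 1, by omega⟩
  have horder : ∏ i ∈ Icc 1 m, (1 - ζ ^ i) = m + 1 := by
    rw [prod_Icc_one_eq_prod_range]; exact hζ.prod_one_sub_pow_eq_order
  rw [(hζ.map_of_injective C_injective).pow_sub_pow_eq_prod_range_sub_mul hn, prod_range_succ',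
    ← prod_Icc_one_eq_prod_range (fun i => 1 + X - C ζ ^ i * X), Nat.add_sub_cancel,
    Nat.cast_succ, ← horder, map_prod, ← prod_mul_distrib]
  simp only [pow_zero, one_mul, add_sub_cancel_right, mul_one]
  refine prod_congr rfl fun i hi => ?_
  have hne : 1 - ζ ^ i ≠ 0 := by
    rw [mem_Icc] at hi
    exact sub_ne_zero.mpr (hζ.pow_ne_one_of_pos_of_lt (by omega) (by omega)).symm
  rw [mul_add, ← C_mul, mul_inv_cancel₀ hne, map_sub, map_pow, map_one]
  ring

theorem natCast_mul_esymm_inv_one_sub_pow (hζ : IsPrimitiveRoot ζ n) (k : ℕ) :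
    (n : K) * ((Icc 1 (n - 1)).val.map fun i => (1 - ζ ^ i)⁻¹).esymm k = n.choose (k + 1) := by
  rcases Nat.eq_zero_or_pos n with rfl | hn
  · simp
  obtain ⟨m, rfl⟩ : ∃ m, n = m + 1 := ⟨n - 1, by omega⟩
  have hcard : Multiset.card (Icc 1 m).val = m := by simp
  rcases le_or_gt k m with hkm | hmk
  · have key := congrArg (coeff · (m - k)) (hζ.C_mul_prod_X_add_C_inv_one_sub_pow hn)
    rw [Nat.add_sub_cancel, coeff_C_mul, Finset.prod,
      Multiset.prod_X_add_C_coeff' _ _ (by rw [hcard]; omega), hcard, Nat.sub_sub_self hkm,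
      coeff_sub, coeff_one_add_X_pow, coeff_X_pow, if_neg (by omega), sub_zero] at key
    rw [Nat.add_sub_cancel, key, Nat.choose_symm_of_eq_add (show m + 1 = m - k + (k + 1) by omega)]
  · rw [Multiset.esymm, Multiset.powersetCard_eq_empty _ (by simpa using hmk),
      Nat.choose_eq_zero_of_lt (by omega)]
    simp

end IsPrimitiveRoot

theorem MvPolynomial.psum_two_mul_psum_three_sub_psum_five (σ R : Type*) [Fintype σ]
    [CommRing R] :
    psum σ R 2 * psum σ R 3 - psum σ R 5 =
      esymm σ R 1 * esymm σ R 2 ^ 2 - 2 * esymm σ R 1 ^ 2 * esymm σ R 3 -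
        esymm σ R 2 * esymm σ R 3 + 5 * esymm σ R 1 * esymm σ R 4 - 5 * esymm σ R 5 := by
  have newton (k : ℕ) (hk : 0 < k) := psum_eq_mul_esymm_sub_sum σ R k hk
  have h2 := newton 2 two_pos
  have h3 := newton 3 three_pos
  have h4 := newton 4 four_pos
  have h5 := newton 5 (by norm_num)
  norm_num [sum_filter, Nat.sum_antidiagonal_eq_sum_range_succ_mk, sum_range_succ] at h2 h3 h4 h5
  rw [h5, h4, h3, h2, esymm_one]
  ring

theorem Finset.sum_pow_two_mul_sum_pow_three_sub_sum_pow_five {ι R : Type*} [CommRing R]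
    (s : Finset ι) (y : ι → R) :
    (∑ i ∈ s, y i ^ 2) * (∑ i ∈ s, y i ^ 3) - ∑ i ∈ s, y i ^ 5 =
      (s.val.map y).esymm 1 * (s.val.map y).esymm 2 ^ 2 -
        2 * (s.val.map y).esymm 1 ^ 2 * (s.val.map y).esymm 3 -
        (s.val.map y).esymm 2 * (s.val.map y).esymm 3 +
        5 * (s.val.map y).esymm 1 * (s.val.map y).esymm 4 - 5 * (s.val.map y).esymm 5 := by
  have h := congrArg (MvPolynomial.aeval fun i : s => y i)
    (MvPolynomial.psum_two_mul_psum_three_sub_psum_five s R)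
  have hpsum (k : ℕ) : MvPolynomial.aeval (fun i : s => y i) (MvPolynomial.psum s R k) =
      ∑ i ∈ s, y i ^ k := by
    simp only [MvPolynomial.psum, map_sum, map_pow, MvPolynomial.aeval_X]
    exact sum_coe_sort s fun i => y i ^ k
  have hesymm (k : ℕ) : MvPolynomial.aeval (fun i : s => y i) (MvPolynomial.esymm s R k) =
      (s.val.map y).esymm k := by
    rw [MvPolynomial.aeval_esymm_eq_multiset_esymm, univ_eq_attach, attach_val]
    exact congrArg (Multiset.esymm · k) (Multiset.attach_map_val' _ _)
  simpa only [map_sub, map_add, map_mul, map_pow, map_ofNat, hpsum, hesymm] using h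

theorem qmzv_23_add_32 (n : ℕ) (hn : 2 ≤ n)
    (ζ : ℂ) (hζ : ζ = Complex.exp (2 * Real.pi * Complex.I / n)) :
    ∑ i ∈ Finset.Icc 1 (n - 1), ∑ j ∈ Finset.Ioc i (n - 1),
        (((1 - ζ ^ i) ^ 2)⁻¹ * ((1 - ζ ^ j) ^ 3)⁻¹ +
          ((1 - ζ ^ i) ^ 3)⁻¹ * ((1 - ζ ^ j) ^ 2)⁻¹) =
      ((n : ℂ) - 1) * ((n : ℂ) - 2) * ((n : ℂ) - 5) * ((n : ℂ) - 7) / 144 := by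
  have hprim : IsPrimitiveRoot ζ n := hζ ▸ Complex.isPrimitiveRoot_exp n (by omega)
  have hn0 : (n : ℂ) ≠ 0 := by norm_cast; omega
  set y : ℕ → ℂ := fun i => (1 - ζ ^ i)⁻¹
  have hesymm (k : ℕ) : ((Icc 1 (n - 1)).val.map y).esymm k = n.choose (k + 1) / n := by
    rw [eq_div_iff hn0, mul_comm, hprim.natCast_mul_esymm_inv_one_sub_pow]
  have hy : ∑ i ∈ Icc 1 (n - 1), ∑ j ∈ Ioc i (n - 1),
      (((1 - ζ ^ i) ^ 2)⁻¹ * ((1 - ζ ^ j) ^ 3)⁻¹ + ((1 - ζ ^ i) ^ 3)⁻¹ * ((1 - ζ ^ j) ^ 2)⁻¹) =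
      ∑ i ∈ Icc 1 (n - 1), ∑ j ∈ Ioc i (n - 1), (y i ^ 2 * y j ^ 3 + y j ^ 2 * y i ^ 3) :=
    sum_congr rfl fun i _ => sum_congr rfl fun j _ => by simp only [y, inv_pow]; ring
  have hsplit := sum_Icc_sum_Ioc_add_swap_add_sum_diag (fun i j => y i ^ 2 * y j ^ 3) 1 (n - 1)
  simp only [← pow_add, Nat.reduceAdd, ← sum_mul_sum] at hsplit
  rw [hy, eq_sub_of_add_eq hsplit, sum_pow_two_mul_sum_pow_three_sub_sum_pow_five]
  simp only [hesymm, Nat.cast_choose_eq_descPochhammer_div, descPochhammer_succ_eval,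
    descPochhammer_zero, eval_one, Nat.factorial]
  field_simp
  ring
end

section
/- Let n ≥ 2 and ζ = exp(2πi/n). Then Σ_{1≤i≤j≤n-1} [(1-ζ^i)^{-1}(1-ζ^j)^{-2} + (1-ζ^i)^{-2}(1-ζ^j)^{-1}] = -(n+1)(n-1)(n-4)/24. -/
/-!
Write `w k = (1 - ζ ^ k)⁻¹` and `p m = ∑_{0<k<n} w k ^ m`. Splitting the double sum into the
off-diagonal part and the diagonal shows that it equals `p 1 * p 2 + p 3`. For a nontrivial
`n`-th root of unity `x`, Abel summation expresses `∑_{j<n} j ^ m * x ^ j` as a polynomial of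
degree `m` in `(1 - x)⁻¹` with leading coefficient `-m! n`; summing over `x = ζ ^ k`, `0 < k < n`,
orthogonality of characters turns the left side into `-∑_{j<n} j ^ m`. This triangular system
gives `p 1 = (n - 1) / 2`, `p 2 = (n - 1)(5 - n) / 12` and `p 3 = -(n - 1)(n - 3) / 8`.
-/

open Complex Finset

theorem sum_Ico_sum_Ico_mul_add_mul {R : Type*} [CommSemiring R] (f g : ℕ → R) {a b : ℕ}
    (hab : a ≤ b) :
    ∑ i ∈ Ico a b, ∑ j ∈ Ico i b, (f i * g j + g i * f j) =
      (∑ i ∈ Ico a b, f i) * ∑ i ∈ Ico a b, g i + ∑ i ∈ Ico a b, f i * g i := by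
  induction b, hab using Nat.le_induction with
  | base => simp
  | succ b hab ih =>
    have inner : ∀ i ∈ Ico a (b + 1), ∑ j ∈ Ico i (b + 1), (f i * g j + g i * f j) =
        ∑ j ∈ Ico i b, (f i * g j + g i * f j) + (f i * g b + g i * f b) :=
      fun i hi => sum_Ico_succ_top (Nat.lt_succ_iff.1 (mem_Ico.1 hi).2) _
    rw [sum_congr rfl inner, sum_add_distrib, sum_Ico_succ_top hab, Ico_self, sum_empty,
      add_zero, ih]
    simp only [sum_Ico_succ_top hab, sum_add_distrib, ← sum_mul]
    ring

theorem sub_one_mul_sum_range_mul_pow {R : Type*} [CommRing R] (p : R → R) (x : R) (n : ℕ) :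
    (x - 1) * ∑ j ∈ range n, p j * x ^ j =
      p (n - 1) * x ^ n - p (-1) - ∑ j ∈ range n, (p j - p (j - 1)) * x ^ j := by
  induction n with
  | zero => simp
  | succ n ih =>
    rw [sum_range_succ, sum_range_succ, mul_add, ih]
    push_cast
    ring_nf

theorem sum_range_natCast_mul_two {R : Type*} [CommRing R] (n : ℕ) :
    (∑ j ∈ range n, (j : R)) * 2 = n * (n - 1) := by
  induction n with
  | zero => simp
  | succ n ih => rw [sum_range_succ, add_mul, ih]; push_cast; ring

theorem sum_range_natCast_sq_mul_six {R : Type*} [CommRing R] (n : ℕ) :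
    (∑ j ∈ range n, (j : R) ^ 2) * 6 = n * (n - 1) * (2 * n - 1) := by
  induction n with
  | zero => simp
  | succ n ih => rw [sum_range_succ, add_mul, ih]; push_cast; ring

theorem sum_range_natCast_pow_three_mul_four {R : Type*} [CommRing R] (n : ℕ) :
    (∑ j ∈ range n, (j : R) ^ 3) * 4 = n ^ 2 * (n - 1) ^ 2 := by
  induction n with
  | zero => simp
  | succ n ih => rw [sum_range_succ, add_mul, ih]; push_cast; ring

section
variable {K : Type*} [Field K] {n : ℕ} {x : K}

theorem sum_range_natCast_mul_pow_of_pow_eq_one (hxn : x ^ n = 1) (hx : x ≠ 1) :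
    ∑ j ∈ range n, (j : K) * x ^ j = -n * (1 - x)⁻¹ := by
  have h := sub_one_mul_sum_range_mul_pow id x n
  simp only [id, sub_sub_cancel, one_mul, hxn, geom_sum_eq hx, sub_self, zero_div] at h
  have hw : (1 - x) * (1 - x)⁻¹ = 1 := mul_inv_cancel₀ (sub_ne_zero.2 hx.symm)
  linear_combination -(1 - x)⁻¹ * h - (∑ j ∈ range n, (j : K) * x ^ j) * hw

theorem sum_range_natCast_sq_mul_pow_of_pow_eq_one (hxn : x ^ n = 1) (hx : x ≠ 1) :
    ∑ j ∈ range n, (j : K) ^ 2 * x ^ j =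
      -(2 * n) * (1 - x)⁻¹ ^ 2 - n * (n - 2) * (1 - x)⁻¹ := by
  have h := sub_one_mul_sum_range_mul_pow (· ^ 2) x n
  have hdiff : ∑ j ∈ range n, ((j : K) ^ 2 - (j - 1) ^ 2) * x ^ j =
      2 * ∑ j ∈ range n, (j : K) * x ^ j - ∑ j ∈ range n, x ^ j := by
    rw [mul_sum, ← sum_sub_distrib]; exact sum_congr rfl fun j _ => by ring
  simp only [hdiff, hxn, geom_sum_eq hx, sub_self, zero_div, sum_range_natCast_mul_pow_of_pow_eq_one hxn hx] at h
  have hw : (1 - x) * (1 - x)⁻¹ = 1 := mul_inv_cancel₀ (sub_ne_zero.2 hx.symm)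
  linear_combination -(1 - x)⁻¹ * h - (∑ j ∈ range n, (j : K) ^ 2 * x ^ j) * hw

theorem sum_range_natCast_pow_three_mul_pow_of_pow_eq_one (hxn : x ^ n = 1) (hx : x ≠ 1) :
    ∑ j ∈ range n, (j : K) ^ 3 * x ^ j =
      -(6 * n) * (1 - x)⁻¹ ^ 3 - 3 * n * (n - 3) * (1 - x)⁻¹ ^ 2
        - n * (n ^ 2 - 3 * n + 3) * (1 - x)⁻¹ := by
  have h := sub_one_mul_sum_range_mul_pow (· ^ 3) x n
  have hdiff : ∑ j ∈ range n, ((j : K) ^ 3 - (j - 1) ^ 3) * x ^ j =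
      3 * ∑ j ∈ range n, (j : K) ^ 2 * x ^ j - 3 * ∑ j ∈ range n, (j : K) * x ^ j
        + ∑ j ∈ range n, x ^ j := by
    simp only [mul_sum, ← sum_sub_distrib, ← sum_add_distrib]
    exact sum_congr rfl fun j _ => by ring
  simp only [hdiff, hxn, geom_sum_eq hx, sub_self, zero_div, sum_range_natCast_mul_pow_of_pow_eq_one hxn hx,
    sum_range_natCast_sq_mul_pow_of_pow_eq_one hxn hx] at h
  have hw : (1 - x) * (1 - x)⁻¹ = 1 := mul_inv_cancel₀ (sub_ne_zero.2 hx.symm)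
  linear_combination -(1 - x)⁻¹ * h - (∑ j ∈ range n, (j : K) ^ 3 * x ^ j) * hw
end

namespace IsPrimitiveRoot
variable {K : Type*} [Field K] {n : ℕ} {ζ : K}

theorem pow_pow_eq_one (hζ : IsPrimitiveRoot ζ n) (k : ℕ) : (ζ ^ k) ^ n = 1 := by
  rw [pow_right_comm, hζ.pow_eq_one, one_pow]

theorem pow_ne_one_of_mem_Ico (hζ : IsPrimitiveRoot ζ n) {k : ℕ} (hk : k ∈ Ico 1 n) :
    ζ ^ k ≠ 1 :=
  hζ.pow_ne_one_of_pos_of_lt (Nat.one_le_iff_ne_zero.1 (mem_Ico.1 hk).1) (mem_Ico.1 hk).2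

variable [NeZero n]

theorem sum_range_sum_range_mul_pow (hζ : IsPrimitiveRoot ζ n) (f : ℕ → K) :
    ∑ k ∈ range n, ∑ j ∈ range n, f j * (ζ ^ k) ^ j = n * f 0 := by
  have hswap : ∑ k ∈ range n, ∑ j ∈ range n, f j * (ζ ^ k) ^ j =
      ∑ j ∈ range n, f j * ∑ k ∈ range n, (ζ ^ j) ^ k := by
    rw [sum_comm]
    exact sum_congr rfl fun j _ => by rw [mul_sum]; simp only [pow_right_comm ζ]
  rw [hswap, sum_eq_single_of_mem 0 (mem_range.2 (NeZero.pos n))]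
  · simp [mul_comm]
  · intro j hj hj0
    rw [geom_sum_eq (hζ.pow_ne_one_of_pos_of_lt hj0 (mem_range.1 hj)), hζ.pow_pow_eq_one,
      sub_self, zero_div, mul_zero]

theorem sum_Ico_sum_range_mul_pow (hζ : IsPrimitiveRoot ζ n) (f : ℕ → K) :
    ∑ k ∈ Ico 1 n, ∑ j ∈ range n, f j * (ζ ^ k) ^ j = n * f 0 - ∑ j ∈ range n, f j := by
  rw [← hζ.sum_range_sum_range_mul_pow f, sum_range_eq_add_Ico _ (NeZero.pos n)]
  simp

variable [CharZero K]

theorem sum_inv_one_sub (hζ : IsPrimitiveRoot ζ n) :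
    ∑ k ∈ Ico 1 n, (1 - ζ ^ k)⁻¹ = ((n : K) - 1) / 2 := by
  have h := hζ.sum_Ico_sum_range_mul_pow (fun j => (j : K))
  rw [sum_congr rfl fun k hk =>
    sum_range_natCast_mul_pow_of_pow_eq_one (hζ.pow_pow_eq_one k) (hζ.pow_ne_one_of_mem_Ico hk)] at h
  have hn : (n : K) ≠ 0 := NeZero.ne _
  have hgauss := sum_range_natCast_mul_two (R := K) n
  rw [← mul_sum] at h
  apply mul_left_cancel₀ hn
  linear_combination -h + hgauss / 2

theorem sum_inv_one_sub_sq (hζ : IsPrimitiveRoot ζ n) :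
    ∑ k ∈ Ico 1 n, (1 - ζ ^ k)⁻¹ ^ 2 = ((n : K) - 1) * (5 - n) / 12 := by
  have h := hζ.sum_Ico_sum_range_mul_pow (fun j => (j : K) ^ 2)
  rw [sum_congr rfl fun k hk =>
    sum_range_natCast_sq_mul_pow_of_pow_eq_one (hζ.pow_pow_eq_one k) (hζ.pow_ne_one_of_mem_Ico hk),
    sum_sub_distrib, ← mul_sum, ← mul_sum, hζ.sum_inv_one_sub] at h
  have hn : (n : K) ≠ 0 := NeZero.ne _
  have hfaul := sum_range_natCast_sq_mul_six (R := K) n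
  apply mul_left_cancel₀ hn
  linear_combination -h / 2 + hfaul / 12

theorem sum_inv_one_sub_pow_three (hζ : IsPrimitiveRoot ζ n) :
    ∑ k ∈ Ico 1 n, (1 - ζ ^ k)⁻¹ ^ 3 = -(((n : K) - 1) * (n - 3)) / 8 := by
  have h := hζ.sum_Ico_sum_range_mul_pow (fun j => (j : K) ^ 3)
  rw [sum_congr rfl fun k hk =>
    sum_range_natCast_pow_three_mul_pow_of_pow_eq_one (hζ.pow_pow_eq_one k) (hζ.pow_ne_one_of_mem_Ico hk),
    sum_sub_distrib, sum_sub_distrib, ← mul_sum, ← mul_sum, ← mul_sum, hζ.sum_inv_one_sub,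
    hζ.sum_inv_one_sub_sq] at h
  have hn : (n : K) ≠ 0 := NeZero.ne _
  have hfaul := sum_range_natCast_pow_three_mul_four (R := K) n
  apply mul_left_cancel₀ hn
  linear_combination -h / 6 + hfaul / 24

end IsPrimitiveRoot

theorem qmzv_star_12_add_21 (n : ℕ) (hn : 2 ≤ n)
    (ζ : ℂ) (hζ : ζ = Complex.exp (2 * Real.pi * Complex.I / n)) :
    ∑ i ∈ Finset.Icc 1 (n - 1), ∑ j ∈ Finset.Icc i (n - 1),
        ((1 - ζ ^ i)⁻¹ * ((1 - ζ ^ j) ^ 2)⁻¹ +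
          ((1 - ζ ^ i) ^ 2)⁻¹ * (1 - ζ ^ j)⁻¹) =
      -(((n : ℂ) + 1) * ((n : ℂ) - 1) * ((n : ℂ) - 4)) / 24 := by
  have hn0 : n ≠ 0 := by omega
  have : NeZero n := ⟨hn0⟩
  have hprim : IsPrimitiveRoot ζ n := hζ ▸ isPrimitiveRoot_exp n hn0
  have hIcc : ∀ a, Icc a (n - 1) = Ico a n :=
    Icc_sub_one_right_eq_Ico_of_not_isMin (by simpa [isMin_iff_eq_bot] using hn0)
  simp_rw [hIcc, ← inv_pow]
  rw [sum_Ico_sum_Ico_mul_add_mul _ _ (by omega : 1 ≤ n)]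
  simp_rw [← pow_succ']
  rw [hprim.sum_inv_one_sub, hprim.sum_inv_one_sub_sq, hprim.sum_inv_one_sub_pow_three]
  ring
end
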